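/- arXiv:2408.09080 — 7 statements merged into one kernel-verified Lean document; each statement's English description precedes it below -/
import Mathlib

section
/- A relation R ⊆ A⁻ × B⁺ is compatible with polarities 𝒜 and ℬ (i.e., cl_𝒜 ∘ R↓ = R↓ = R↓ ∘ cl^ℬ) if and only if for all X ⊆ A⁻ and Y ⊆ B⁺: X × Y ⊆ R implies cl_𝒜(X) × cl^ℬ(Y) ⊆ R. -/
/-! `down` and `up` are Mathlib's `lowerPolar` and `upperPolar`, so `cl_𝒜 = down A ∘ up A` and
`cl^ℬ = up B ∘ down B` are closure operators and `down R` is antitone. Both compatibility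
equations then say that the cycle
`down R (cl^ℬ Y) ⊆ down R Y ⊆ cl_𝒜 (down R Y) ⊆ down R (cl^ℬ Y)`
closes, i.e. that its one non-trivial inclusion `cl_𝒜 (down R Y) ⊆ down R (cl^ℬ Y)` holds.
Since a rectangle `X × Y ⊆ R` is exactly `X ⊆ down R Y`, and `cl_𝒜` is monotone, that inclusion
for all `Y` is the rectangle condition. -/

def down {A B : Type*} (R : A → B → Prop) (Y : Set B) : Set A := {a | ∀ b ∈ Y, R a b}
def up {A B : Type*} (R : A → B → Prop) (X : Set A) : Set B := {b | ∀ a ∈ X, R a b}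
def bracket {A B : Type*} (f : Set B → Set A) : A → B → Prop := fun a b => a ∈ f {b}
def Compat {Am Ap Bm Bp : Type*} (A : Am → Ap → Prop) (B : Bm → Bp → Prop)
    (R : Am → Bp → Prop) : Prop :=
  (∀ Y : Set Bp, down A (up A (down R Y)) = down R Y) ∧
  (∀ Y : Set Bp, down R (up B (down B Y)) = down R Y)
def comp {Am Bm Bp Cp : Type*} (R : Am → Bp → Prop) (B : Bm → Bp → Prop)
    (S : Bm → Cp → Prop) : Am → Cp → Prop :=
  fun a c => a ∈ down R (up B (down S {c}))

section Polar

variable {α β : Type*} (R : α → β → Prop)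

theorem down_anti : Antitone (down R) := lowerPolar_anti R

theorem subset_down_up (X : Set α) : X ⊆ down R (up R X) := subset_lowerPolar_upperPolar R X

theorem subset_up_down (Y : Set β) : Y ⊆ up R (down R Y) := subset_upperPolar_lowerPolar R Y

theorem down_up_mono : Monotone (down R ∘ up R) := lowerPolar_upperPolar_monotone R

end Polar

theorem compat_iff_forall_down_up_down_subset {Am Ap Bm Bp : Type*} (A : Am → Ap → Prop)
    (B : Bm → Bp → Prop) (R : Am → Bp → Prop) :
    Compat A B R ↔ ∀ Y, down A (up A (down R Y)) ⊆ down R (up B (down B Y)) := by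
  constructor
  · rintro ⟨hA, hB⟩ Y
    rw [hA, hB]
  · intro h
    refine ⟨fun Y => ?_, fun Y => ?_⟩
    · have hB : down R (up B (down B Y)) ⊆ down R Y := down_anti R (subset_up_down B Y)
      exact (h Y |>.trans hB).antisymm (subset_down_up A _)
    · have hA : down R Y ⊆ down A (up A (down R Y)) := subset_down_up A _
      exact (down_anti R (subset_up_down B Y)).antisymm (hA.trans (h Y))

theorem stmt6 {Am Ap Bm Bp : Type*} (A : Am → Ap → Prop) (B : Bm → Bp → Prop)
    (R : Am → Bp → Prop) :
    Compat A B R ↔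
      ∀ (X : Set Am) (Y : Set Bp), (∀ a ∈ X, ∀ β ∈ Y, R a β) →
        ∀ a ∈ down A (up A X), ∀ β ∈ up B (down B Y), R a β := by
  rw [compat_iff_forall_down_up_down_subset]
  constructor
  · intro h X Y hXY
    have hX : X ⊆ down R Y := hXY
    exact (down_up_mono A hX).trans (h Y)
  · intro h Y
    exact h (down R Y) Y fun _ ha => ha
end

section
/- Suppose R ⊆ A⁻ × B⁺ is compatible with polarities 𝒜 and ℬ, and S ⊆ B⁻ × C⁺ is compatible with ℬ and 𝒞. Then the composite map R↓ ∘ ℬ↑ ∘ S↓ : P(C⁺) → P(A⁻) sends arbitrary unions to intersections. -/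
/-! Each `down S Z` is closed for `ℬ`, so the intersection of the `down S Z` is `ℬ↓` of the union of
their `ℬ`-polars; compatibility of `R` with `ℬ` then removes the outer closure `ℬ↑ℬ↓`, and `R↓` turns
that union into an intersection. -/

theorem down_biUnion {A B I : Type*} (R : A → B → Prop) (s : Set I) (f : I → Set B) :
    down R (⋃ i ∈ s, f i) = ⋂ i ∈ s, down R (f i) :=
  lowerPolar_iUnion₂ R fun i (_ : i ∈ s) => f i

theorem down_sUnion {A B : Type*} (R : A → B → Prop) (𝒴 : Set (Set B)) :
    down R (⋃₀ 𝒴) = ⋂ Y ∈ 𝒴, down R Y := by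
  rw [Set.sUnion_eq_biUnion, down_biUnion]

theorem down_sUnion_eq_down_biUnion_up {Bm Bp Cp : Type*} (B : Bm → Bp → Prop)
    (S : Bm → Cp → Prop) (hS : ∀ Z : Set Cp, down B (up B (down S Z)) = down S Z)
    (𝒵 : Set (Set Cp)) :
    down S (⋃₀ 𝒵) = down B (⋃ Z ∈ 𝒵, up B (down S Z)) := by
  rw [down_sUnion, down_biUnion]
  exact Set.iInter₂_congr fun Z _ => (hS Z).symm

theorem stmt7 {Am Ap Bm Bp Cm Cp : Type*} (A : Am → Ap → Prop) (B : Bm → Bp → Prop)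
    (C : Cm → Cp → Prop) (R : Am → Bp → Prop) (S : Bm → Cp → Prop)
    (hR : Compat A B R) (hS : Compat B C S) :
    ∀ 𝒵 : Set (Set Cp),
      down R (up B (down S (⋃₀ 𝒵))) = ⋂ Z ∈ 𝒵, down R (up B (down S Z)) := by
  intro 𝒵
  rw [down_sUnion_eq_down_biUnion_up B S hS.1, hR.2, down_biUnion]
end

section
/- Composition in the category of polarities preserves arbitrary intersections in the middle argument: for compatible relations Q : 𝒜 → ℬ, Rᵢ : ℬ → 𝒞 (i ∈ I), and S : 𝒞 → 𝒟, one has Q ⨟ (⋂ᵢ Rᵢ) ⨟ S = ⋂ᵢ (Q ⨟ Rᵢ ⨟ S). -/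
/-!
Intersecting relations on the left of `comp` commutes with `comp` outright, since `down` turns
an intersection of relations into an intersection of sets. In the middle, the sets
`down (Rᵢ) {γ}` are `B`-closed, so their intersection equals `down B (⋃ᵢ up B (down (Rᵢ) {γ}))`;
compatibility of `Q` with `B` then removes the closure and `down Q` turns the union into an intersection.
-/

section Polarity

variable {A B ι : Type*}

lemma down_iUnion (R : A → B → Prop) (Y : ι → Set B) :
    down R (⋃ i, Y i) = ⋂ i, down R (Y i) := by
  ext a
  simp only [down, Set.mem_iUnion, Set.mem_iInter, Set.mem_ofPred_eq]
  exact ⟨fun h i b hb => h b ⟨i, hb⟩, fun h b ⟨i, hb⟩ => h i b hb⟩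

lemma down_forall (R : ι → A → B → Prop) (Y : Set B) :
    down (fun a b => ∀ i, R i a b) Y = ⋂ i, down (R i) Y := by
  ext a
  simp only [down, Set.mem_iInter, Set.mem_ofPred_eq]
  exact ⟨fun h i b hb => h b hb i, fun h b hb i => h i b hb⟩

lemma down_up_iInter_of_closed {Am Bm Bp : Type*} {B : Bm → Bp → Prop} {Q : Am → Bp → Prop}
    (hQ : ∀ Y : Set Bp, down Q (up B (down B Y)) = down Q Y)
    {X : ι → Set Bm} (hX : ∀ i, down B (up B (X i)) = X i) :
    down Q (up B (⋂ i, X i)) = ⋂ i, down Q (up B (X i)) := by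
  have hclosed : ⋂ i, X i = down B (⋃ i, up B (X i)) := by
    rw [down_iUnion]
    exact Set.iInter_congr fun i => (hX i).symm
  rw [hclosed, hQ, down_iUnion]

end Polarity

lemma comp_forall_left {Am Bm Bp Cp ι : Type*} (R : ι → Am → Bp → Prop)
    (B : Bm → Bp → Prop) (S : Bm → Cp → Prop) :
    comp (fun a b => ∀ i, R i a b) B S = fun a c => ∀ i, comp (R i) B S a c := by
  ext a c
  simp only [comp, down_forall, Set.mem_iInter]

lemma comp_forall_right {Am Bm Bp Cp ι : Type*} {Q : Am → Bp → Prop} {B : Bm → Bp → Prop}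
    {R : ι → Bm → Cp → Prop} (hQ : ∀ Y : Set Bp, down Q (up B (down B Y)) = down Q Y)
    (hR : ∀ i (Y : Set Cp), down B (up B (down (R i) Y)) = down (R i) Y) :
    comp Q B (fun b c => ∀ i, R i b c) = fun a c => ∀ i, comp Q B (R i) a c := by
  ext a c
  simp only [comp, down_forall, down_up_iInter_of_closed hQ fun i => hR i {c}, Set.mem_iInter]

theorem stmt12_general {Am Ap Bm Bp Cm Cp Dp : Type*} {ι : Type*}
    (A : Am → Ap → Prop) (B : Bm → Bp → Prop) (C : Cm → Cp → Prop)
    (Q : Am → Bp → Prop) (R : ι → Bm → Cp → Prop) (S : Cm → Dp → Prop)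
    (hQ : Compat A B Q) (hR : ∀ i, Compat B C (R i)) :
    comp (comp Q B (fun b γ => ∀ i, R i b γ)) C S =
      fun a δ => ∀ i, comp (comp Q B (R i)) C S a δ := by
  rw [comp_forall_right hQ.2 fun i => (hR i).1, comp_forall_left]

theorem stmt12 {Am Ap Bm Bp Cm Cp Dm Dp : Type*} {ι : Type*}
    (A : Am → Ap → Prop) (B : Bm → Bp → Prop) (C : Cm → Cp → Prop) (D : Dm → Dp → Prop)
    (Q : Am → Bp → Prop) (R : ι → Bm → Cp → Prop) (S : Cm → Dp → Prop)
    (hQ : Compat A B Q) (hR : ∀ i, Compat B C (R i)) (hS : Compat C D S) :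
    comp (comp Q B (fun b γ => ∀ i, R i b γ)) C S =
      fun a δ => ∀ i, comp (comp Q B (R i)) C S a δ :=
  stmt12_general A B C Q R S hQ hR
end

section
/- The category Pol of polarities and compatible relations is self-dual: the assignment sending a polarity 𝒜 = (A⁻,A⁺;𝒜) to 𝒜^∂ = (A⁺,A⁻;𝒜ᵀ) and a compatible relation R : 𝒜 → ℬ to its converse Rᵀ : ℬ^∂ → 𝒜^∂ is a contravariant functor whose square is the identity, hence a dual isomorphism of categories. -/
/-! Compatibility of `R : 𝒜 → ℬ` says that every `R`-extent is an `𝒜`-extent and every `R`-intent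
is a `ℬ`-intent. Taking converses exchanges extents and intents, so `Rᵀ` is compatible with `ℬᵀ`
and `𝒜ᵀ`. For composition, `a (R ⨟ S) c` says `ℬ↑(S↓{c}) ⊆ R↑{a}` and `c (Sᵀ ⨟ Rᵀ) a` says
`ℬ↓(R↑{a}) ⊆ S↓{c}`; since `S↓{c}` is a `ℬ`-extent and `R↑{a}` a `ℬ`-intent, these agree because
`ℬ↑` and `ℬ↓` are mutually inverse antitone bijections between `ℬ`-extents and `ℬ`-intents. -/

-- `down` and `up` are definitionally Mathlib's `lowerPolar` and `upperPolar`.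
open Order

section Polars

variable {α β : Type*} {r : α → β → Prop}

theorem upperPolar_subset_iff_lowerPolar_subset {s : Set α} {t : Set β} (hs : IsExtent r s)
    (ht : IsIntent r t) : upperPolar r s ⊆ t ↔ lowerPolar r t ⊆ s :=
  ⟨fun h => hs.eq ▸ lowerPolar_anti r h, fun h => ht.eq ▸ upperPolar_anti r h⟩

theorem lowerPolar_intentClosure_eq_iff {γ : Type*} (b : γ → β → Prop) :
    (∀ t, lowerPolar r (upperPolar b (lowerPolar b t)) = lowerPolar r t) ↔
      ∀ s, IsIntent b (upperPolar r s) := by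
  constructor
  · intro h s
    refine isIntent_iff.2 (Set.Subset.antisymm ?_ (subset_upperPolar_lowerPolar b _))
    rw [subset_upperPolar_iff_subset_lowerPolar, h]
    exact subset_lowerPolar_upperPolar r s
  · intro h t
    refine Set.Subset.antisymm (lowerPolar_anti r (subset_upperPolar_lowerPolar b t)) ?_
    intro a ha
    have hta : t ⊆ upperPolar r {a} :=
      subset_upperPolar_iff_subset_lowerPolar.2 (Set.singleton_subset_iff.2 ha)
    exact Set.singleton_subset_iff.1 <| subset_upperPolar_iff_subset_lowerPolar.1 <|
      (h {a}).upperPolar_lowerPolar_subset hta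

end Polars

section Compat

variable {Am Ap Bm Bp Cm Cp : Type*} {A : Am → Ap → Prop} {B : Bm → Bp → Prop}
  {C : Cm → Cp → Prop}

theorem compat_iff {R : Am → Bp → Prop} :
    Compat A B R ↔ (∀ t, IsExtent A (lowerPolar R t)) ∧ ∀ s, IsIntent B (upperPolar R s) := by
  simp only [Compat, isExtent_iff]
  exact and_congr Iff.rfl (lowerPolar_intentClosure_eq_iff B)

theorem compat_flip_iff {R : Am → Bp → Prop} :
    Compat (flip B) (flip A) (flip R) ↔ Compat A B R := by
  rw [compat_iff, compat_iff]
  exact and_comm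

theorem flip_comp {R : Am → Bp → Prop} {S : Bm → Cp → Prop} (hR : Compat A B R)
    (hS : Compat B C S) : flip (comp R B S) = comp (flip S) (flip B) (flip R) := by
  ext c a
  change a ∈ lowerPolar R (upperPolar B (lowerPolar S {c})) ↔
    c ∈ upperPolar S (lowerPolar B (upperPolar R {a}))
  rw [← Set.singleton_subset_iff, ← Set.singleton_subset_iff,
    ← subset_upperPolar_iff_subset_lowerPolar (r := R),
    subset_upperPolar_iff_subset_lowerPolar (r := S)]
  exact upperPolar_subset_iff_lowerPolar_subset ((compat_iff.1 hS).1 {c}) ((compat_iff.1 hR).2 {a})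

end Compat

theorem stmt13 {Am Ap Bm Bp Cm Cp : Type*}
    (A : Am → Ap → Prop) (B : Bm → Bp → Prop) (C : Cm → Cp → Prop) :
    (∀ R : Am → Bp → Prop, Compat A B R →
      Compat (flip B) (flip A) (flip R)) ∧
    (∀ (R : Am → Bp → Prop) (S : Bm → Cp → Prop), Compat A B R → Compat B C S →
      flip (comp R B S) = comp (flip S) (flip B) (flip R)) ∧
    (∀ R : Am → Bp → Prop, flip (flip R) = R) :=
  ⟨fun _ hR => compat_flip_iff.2 hR, fun _ _ hR hS => flip_comp hR hS, fun _ => rfl⟩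
end

section
/- If a compatible relation R : ℬ → 𝒞 satisfies R↓∘R↑ ≤ cl_ℬ pointwise (where cl_ℬ = ℬ↓∘ℬ↑), then R is a monomorphism in Pol: for all compatible P, Q : 𝒜 → ℬ, P ⨟ R = Q ⨟ R implies P = Q. -/
/-!
Write `V = B↓{b}` and `Y = R↑V`. The hypothesis, applied to the `B`-closed set `V`, gives `R↓Y = V`.
Since `R` is compatible with `B`, each `R↓{c}` is `B`-closed, so the set
`W = ⋃ c ∈ Y, B↑R↓{c}` has `B↓W = ⋂ c ∈ Y, R↓{c} = R↓Y = V = B↓{b}`. As `P↓` only sees `B`-closures,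
`P↓{b} = P↓W`, i.e. `P a b ↔ ∀ c ∈ Y, (P ⨟ R) a c`. Thus `P` is recovered from `P ⨟ R`.
-/

open Set

theorem down_eq_lowerPolar {α β : Type*} (r : α → β → Prop) : down r = lowerPolar r := rfl

theorem down_up_eq_of_subset_closure {α β γ : Type*} {B : α → β → Prop} {R : α → γ → Prop}
    (h : ∀ X : Set α, down R (up R X) ⊆ down B (up B X)) (Y : Set β) :
    down R (up R (down B Y)) = down B Y :=
  ((h _).trans (lowerPolar_upperPolar_lowerPolar B Y).le).antisymm
    (subset_lowerPolar_upperPolar R _)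

namespace Compat

variable {Am Ap Bm Bp Cp : Type*} {A : Am → Ap → Prop} {B : Bm → Bp → Prop}

theorem down_congr {P : Am → Bp → Prop} (hP : Compat A B P) {Y Y' : Set Bp}
    (hY : down B Y = down B Y') : down P Y = down P Y' := by
  rw [← hP.2 Y, hY, hP.2]

theorem down_iUnion_up_down {Cm : Type*} {C : Cm → Cp → Prop} {R : Bm → Cp → Prop}
    (hR : Compat B C R) (Y : Set Cp) :
    down B (⋃ c ∈ Y, up B (down R {c})) = down R Y := by
  calc down B (⋃ c ∈ Y, up B (down R {c}))
      = ⋂ c ∈ Y, down B (up B (down R {c})) := lowerPolar_iUnion₂ ..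
    _ = ⋂ c ∈ Y, down R {c} := by simp only [hR.1]
    _ = down R Y := by rw [down_eq_lowerPolar, ← lowerPolar_iUnion₂, biUnion_of_singleton]

theorem apply_iff_forall_comp {Cm : Type*} {C : Cm → Cp → Prop} {P : Am → Bp → Prop}
    {R : Bm → Cp → Prop} (hP : Compat A B P) (hR : Compat B C R)
    (h : ∀ X : Set Bm, down R (up R X) ⊆ down B (up B X)) (a : Am) (b : Bp) :
    P a b ↔ ∀ c ∈ up R (down B {b}), comp P B R a c := by
  have hW := hP.down_congr <| (hR.down_iUnion_up_down _).trans (down_up_eq_of_subset_closure h {b})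
  rw [← mem_lowerPolar_singleton (r := P), ← down_eq_lowerPolar, ← hW]
  simp only [down_eq_lowerPolar, lowerPolar_iUnion₂, mem_iInter₂]
  rfl

end Compat

theorem stmt14 {Am Ap Bm Bp Cm Cp : Type*}
    (A : Am → Ap → Prop) (B : Bm → Bp → Prop) (C : Cm → Cp → Prop)
    (R : Bm → Cp → Prop) (hR : Compat B C R)
    (h : ∀ X : Set Bm, down R (up R X) ⊆ down B (up B X)) :
    ∀ P Q : Am → Bp → Prop, Compat A B P → Compat A B Q →
      comp P B R = comp Q B R → P = Q := by
  intro P Q hP hQ hPQ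
  ext a b
  rw [hP.apply_iff_forall_comp hR h, hQ.apply_iff_forall_comp hR h, hPQ]
end

section
/- If a compatible relation R : 𝒜 → ℬ is both a monomorphism and an epimorphism in Pol (equivalently, R↓R↑ = 𝒜↓𝒜↑ and R↑R↓ = ℬ↑ℬ↓), then R is an isomorphism: the relation R⁻ = rel(ℬ) ⨟_{pol(R)} rel(𝒜) is a two-sided inverse, i.e., R ⨟ R⁻ = 𝒜 and R⁻ ⨟ R = ℬ. -/
section Polars

variable {α β γ δ : Type*} (R : α → β → Prop)

theorem down_up_down (Y : Set β) : down R (up R (down R Y)) = down R Y :=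
  lowerPolar_upperPolar_lowerPolar R Y

theorem mem_down_singleton {a : α} {b : β} : a ∈ down R {b} ↔ R a b :=
  mem_lowerPolar_singleton R

theorem down_iUnion₂ {ι : Type*} (s : Set ι) (f : ι → Set β) :
    down R (⋃ i ∈ s, f i) = ⋂ i ∈ s, down R (f i) :=
  lowerPolar_iUnion₂ R fun i (_ : i ∈ s) => f i

theorem down_comp (B : γ → β → Prop) (S : γ → δ → Prop) (T : Set δ) :
    down (comp R B S) T = down R (⋃ c ∈ T, up B (down S {c})) := by
  rw [down_iUnion₂]
  ext a
  exact Set.mem_iInter₂.symm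

theorem down_comp_singleton (B : γ → β → Prop) (S : γ → δ → Prop) (c : δ) :
    down (comp R B S) {c} = down R (up B (down S {c})) := by
  ext a
  exact mem_down_singleton _

end Polars

section Inverse

variable {Am Ap Bm Bp : Type*} {A : Am → Ap → Prop} {B : Bm → Bp → Prop} {R : Am → Bp → Prop}

theorem down_biUnion_up_down_singleton_of_mono
    (hmono : ∀ X : Set Am, down R (up R X) = down A (up A X)) (T : Set Ap) :
    down R (⋃ p ∈ T, up R (down A {p})) = down A T := by
  rw [down_iUnion₂]
  simp_rw [hmono, down_up_down]
  rw [← down_iUnion₂, Set.biUnion_of_singleton]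

theorem comp_comp_eq_of_mono (hR : Compat A B R)
    (hmono : ∀ X : Set Am, down R (up R X) = down A (up A X)) :
    comp R B (comp B R A) = A := by
  funext a p
  show (a ∈ down R (up B (down (comp B R A) {p}))) = A a p
  rw [down_comp_singleton, hR.2, hmono, down_up_down, mem_down_singleton]

theorem comp_comp_eq_of_mono_of_epi (hR : Compat A B R)
    (hmono : ∀ X : Set Am, down R (up R X) = down A (up A X))
    (hepi : ∀ Y : Set Bp, up R (down R Y) = up B (down B Y)) :
    comp (comp B R A) A R = B := by
  funext b c
  show (b ∈ down (comp B R A) (up A (down R {c}))) = B b c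
  rw [down_comp, ← down_up_down B, ← hepi, down_biUnion_up_down_singleton_of_mono hmono,
    hR.1, hepi, down_up_down, mem_down_singleton]

end Inverse

theorem stmt15 {Am Ap Bm Bp : Type*} (A : Am → Ap → Prop) (B : Bm → Bp → Prop)
    (R : Am → Bp → Prop) (hR : Compat A B R)
    (hmono : ∀ X : Set Am, down R (up R X) = down A (up A X))
    (hepi : ∀ Y : Set Bp, up R (down R Y) = up B (down B Y)) :
    comp R B (comp B R A) = A ∧ comp (comp B R A) A R = B :=
  ⟨comp_comp_eq_of_mono hR hmono, comp_comp_eq_of_mono_of_epi hR hmono hepi⟩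
end

section
/- For an INF morphism h : M → L between complete lattices (h preserves arbitrary infima), the relation C(h) ⊆ L × M defined by a C(h) b iff a ≤ h(b) is compatible with the polarities C(L) = (L,L,≤) and C(M) = (M,M,≤); moreover C(h)↓(Y) = ↓h(⋀Y) and C(h)↑(X) = ↑h_*(⋁X), where h_* is the left adjoint of h. Furthermore C preserves composition: for g : N → M and h : M → L both preserving infima, C(h∘g) = C(h) ⨟ C(g), i.e., C(h∘g)↓ = C(h)↓ ∘ (≤_M)↑ ∘ C(g)↓. -/
/-!
Because `h` preserves infima, `C(h)↓ Y = ↓h(⋀Y)` is a principal ideal, and the Galois connection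
`h_* ⊣ h` turns `C(h)↑ X` into the principal filter `↑h_*(⋁X)`. Principal ideals and filters are
fixed by the closure `(≤)↓(≤)↑` of `(L, L, ≤)`, which gives compatibility; for composition,
`C(g)↓{c} = ↓g(c)` and `C(h)↓ ((≤)↑ ↓g(c)) = C(h)↓ (↑g(c)) = ↓h(g(c))`.
-/

section CompleteLattice

variable {L M N : Type*} [CompleteLattice L] [CompleteLattice M]

lemma down_singleton {A B : Type*} (R : A → B → Prop) (b : B) : down R {b} = {a | R a b} := by
  ext a; simp [down]

lemma down_le_eq_Iic_sInf (Y : Set L) : down ((· ≤ ·) : L → L → Prop) Y = Set.Iic (sInf Y) := by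
  ext a; simp [down, le_sInf_iff]

lemma up_le_Iic (m : L) : up ((· ≤ ·) : L → L → Prop) (Set.Iic m) = Set.Ici m := by
  ext b
  exact ⟨fun hb => hb m le_rfl, fun hb _ ha => ha.trans hb⟩

lemma down_le_Ici (m : L) : down ((· ≤ ·) : L → L → Prop) (Set.Ici m) = Set.Iic m := by
  ext a
  exact ⟨fun ha => ha m le_rfl, fun ha _ hb => ha.trans hb⟩

lemma down_le_apply {h : M → L} (hinf : ∀ s : Set M, h (sInf s) = sInf (h '' s)) (Y : Set M) :
    down (fun (a : L) (b : M) => a ≤ h b) Y = Set.Iic (h (sInf Y)) := by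
  ext a
  simp only [down, Set.mem_ofPred_eq, Set.mem_Iic, hinf, le_sInf_iff, Set.forall_mem_image]

lemma up_le_apply_of_galoisConnection {h : M → L} {hs : L → M} (gc : GaloisConnection hs h)
    (X : Set L) : up (fun (a : L) (b : M) => a ≤ h b) X = Set.Ici (hs (sSup X)) := by
  ext b
  simp only [up, Set.mem_ofPred_eq, Set.mem_Ici, gc _ b, ← sSup_le_iff]

lemma compat_le_apply {h : M → L} (hinf : ∀ s : Set M, h (sInf s) = sInf (h '' s)) :
    Compat ((· ≤ ·) : L → L → Prop) ((· ≤ ·) : M → M → Prop) (fun a b => a ≤ h b) := by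
  constructor
  · intro Y
    rw [down_le_apply hinf, up_le_Iic, down_le_Ici]
  · intro Y
    rw [down_le_eq_Iic_sInf, up_le_Iic, down_le_apply hinf, down_le_apply hinf, csInf_Ici]

lemma comp_le_apply [CompleteLattice N] {h : M → L}
    (hinf : ∀ s : Set M, h (sInf s) = sInf (h '' s)) (g : N → M) :
    comp (fun (a : L) (b : M) => a ≤ h b) ((· ≤ ·) : M → M → Prop)
        (fun (b : M) (c : N) => b ≤ g c) = fun a c => a ≤ h (g c) := by
  funext a c
  have hc : down (fun (b : M) (c : N) => b ≤ g c) {c} = Set.Iic (g c) := down_singleton _ c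
  simp only [comp, hc, up_le_Iic, down_le_apply hinf, csInf_Ici, Set.mem_Iic]

end CompleteLattice

theorem stmt18_general {L M N : Type*} [CompleteLattice L] [CompleteLattice M] [CompleteLattice N]
    (h : M → L) (hinf : ∀ s : Set M, h (sInf s) = sInf (h '' s))
    (g : N → M) :
    Compat ((· ≤ ·) : L → L → Prop) ((· ≤ ·) : M → M → Prop) (fun a b => a ≤ h b) ∧
    (∀ Y : Set M, down (fun (a : L) (b : M) => a ≤ h b) Y = Set.Iic (h (sInf Y))) ∧
    (∀ hs : L → M, GaloisConnection hs h →
      ∀ X : Set L, up (fun (a : L) (b : M) => a ≤ h b) X = Set.Ici (hs (sSup X))) ∧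
    comp (fun (a : L) (b : M) => a ≤ h b) ((· ≤ ·) : M → M → Prop)
        (fun (b : M) (c : N) => b ≤ g c)
      = fun a c => a ≤ h (g c) :=
  ⟨compat_le_apply hinf, down_le_apply hinf,
    fun _ gc => up_le_apply_of_galoisConnection gc, comp_le_apply hinf g⟩

theorem stmt18 {L M N : Type*} [CompleteLattice L] [CompleteLattice M] [CompleteLattice N]
    (h : M → L) (hinf : ∀ s : Set M, h (sInf s) = sInf (h '' s))
    (g : N → M) (ginf : ∀ s : Set N, g (sInf s) = sInf (g '' s)) :
    Compat ((· ≤ ·) : L → L → Prop) ((· ≤ ·) : M → M → Prop) (fun a b => a ≤ h b) ∧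
    (∀ Y : Set M, down (fun (a : L) (b : M) => a ≤ h b) Y = Set.Iic (h (sInf Y))) ∧
    (∀ hs : L → M, GaloisConnection hs h →
      ∀ X : Set L, up (fun (a : L) (b : M) => a ≤ h b) X = Set.Ici (hs (sSup X))) ∧
    comp (fun (a : L) (b : M) => a ≤ h b) ((· ≤ ·) : M → M → Prop)
        (fun (b : M) (c : N) => b ≤ g c)
      = fun a c => a ≤ h (g c) :=
  stmt18_general h hinf g
end
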